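/- Let σ² > 0, let a ∈ ℝ, let (Ω, P) be a probability space, and let b : Ω → ℝ be measurable with ∫ (a − b(ω))² dP(ω) < ∞. Let ν be the Gaussian mixture measure on ℝ defined by ν(A) = ∫ N(b(ω), σ²)(A) dP(ω). Then D_KL( N(a, σ²) ‖ ν ) ≤ ∫ (a − b(ω))² / (2σ²) dP(ω), where N(m, σ²) denotes the Gaussian measure on ℝ with mean m and variance σ². -/

import Mathlib

open MeasureTheory ProbabilityTheory
open scoped ENNReal ProbabilityTheory Classical NNReal

/-- The Kullback–Leibler divergence `D_KL(μ‖ν)`, with values in the extended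
nonnegative reals: `∫ log (dμ/dν) dμ` if `μ ≪ ν` and the integral exists,
and `+∞` otherwise. -/
noncomputable def klDiv {α : Type*} [MeasurableSpace α] (μ ν : Measure α) : ℝ≥0∞ :=
  if μ ≪ ν ∧ Integrable (llr μ ν) μ then ENNReal.ofReal (∫ x, llr μ ν x ∂μ) else ∞

/-!
`N(a, v)` and the mixture are the second marginals of `P ⊗ N(a, v)` and of `P ⊗ N(b(·), v)`, so by
the data processing inequality for the projection it suffices to bound the divergence between
these joint laws (this is the convexity of `D_KL` in its second argument). Fibrewise,
`N(a, v)` has density `exp (((x - b)² - (x - a)²) / 2v)` with respect to `N(b, v)`, so the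
log-likelihood ratio of the joint laws is that exponent, whose `N(a, v)`-mean is `(a - b)² / 2v`.
-/

open Real

section KullbackLeibler

variable {α : Type*} [MeasurableSpace α] {μ ν : Measure α}

lemma klDiv_eq_informationTheory_klDiv [IsProbabilityMeasure μ] [IsProbabilityMeasure ν] :
    klDiv μ ν = InformationTheory.klDiv μ ν := by
  by_cases h : μ ≪ ν ∧ Integrable (llr μ ν) μ
  · simp [klDiv, h, InformationTheory.klDiv_of_ac_of_integrable h.1 h.2]
  · rw [klDiv, if_neg h, eq_comm, InformationTheory.klDiv_eq_top_iff]
    exact fun hμν hint => h ⟨hμν, hint⟩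

lemma llr_ae_eq_of_eq_withDensity_exp [SigmaFinite ν] {g : α → ℝ} (hg : Measurable g)
    (hμ : μ = ν.withDensity fun x => ENNReal.ofReal (exp (g x))) :
    llr μ ν =ᵐ[μ] g := by
  have hμν : μ ≪ ν := hμ ▸ withDensity_absolutelyContinuous _ _
  refine hμν.ae_eq ?_
  filter_upwards [hμ ▸ Measure.rnDeriv_withDensity ν (by fun_prop)] with x hx
  simp [llr_def, hx, (exp_pos _).le]

lemma klDiv_eq_integral_of_eq_withDensity_exp [IsProbabilityMeasure μ] [IsProbabilityMeasure ν]
    {g : α → ℝ} (hg : Measurable g)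
    (hμ : μ = ν.withDensity fun x => ENNReal.ofReal (exp (g x))) (hint : Integrable g μ) :
    InformationTheory.klDiv μ ν = ENNReal.ofReal (∫ x, g x ∂μ) := by
  have hllr := llr_ae_eq_of_eq_withDensity_exp hg hμ
  rw [InformationTheory.klDiv_of_ac_of_integrable (hμ ▸ withDensity_absolutelyContinuous _ _)
    (hint.congr hllr.symm), integral_congr_ae hllr]
  simp

lemma klDiv_comp_le_klDiv_compProd {β : Type*} [MeasurableSpace β] (P : Measure α)
    [IsProbabilityMeasure P] (κ η : Kernel α β) [IsMarkovKernel κ] [IsMarkovKernel η] :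
    InformationTheory.klDiv (κ ∘ₘ P) (η ∘ₘ P) ≤ InformationTheory.klDiv (P ⊗ₘ κ) (P ⊗ₘ η) := by
  rw [← Measure.snd_compProd P κ, ← Measure.snd_compProd P η]
  exact InformationTheory.klDiv_map_le _ _ measurable_snd

end KullbackLeibler

section Gaussian

/-- `log` of the ratio of the densities of `N(a, v)` and `N(m, v)` at `x`. -/
noncomputable def gaussianLogRatio (v : ℝ≥0) (a m x : ℝ) : ℝ :=
  ((x - m) ^ 2 - (x - a) ^ 2) / (2 * v)

lemma gaussianReal_eq_withDensity_exp_gaussianLogRatio {v : ℝ≥0} (hv : v ≠ 0) (a m : ℝ) :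
    gaussianReal a v = (gaussianReal m v).withDensity
      fun x => ENNReal.ofReal (exp (gaussianLogRatio v a m x)) := by
  rw [gaussianReal_of_var_ne_zero a hv, gaussianReal_of_var_ne_zero m hv,
    ← withDensity_mul _ (measurable_gaussianPDF m v) (by unfold gaussianLogRatio; fun_prop)]
  congr 1
  ext x
  rw [Pi.mul_apply, gaussianPDF, gaussianPDF, ← ENNReal.ofReal_mul (gaussianPDFReal_nonneg _ _ _),
    gaussianPDFReal, gaussianPDFReal, gaussianLogRatio]
  congr 1
  rw [mul_assoc _ (rexp _), ← exp_add]
  congr 2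
  ring

lemma integral_gaussianLogRatio (v : ℝ≥0) (a m : ℝ) :
    ∫ x, gaussianLogRatio v a m x ∂gaussianReal a v = (a - m) ^ 2 / (2 * v) := by
  have hid : Integrable (fun x => x) (gaussianReal a v) :=
    (memLp_id_gaussianReal 1).integrable le_rfl
  have hsub : Integrable (fun x => x - a) (gaussianReal a v) := hid.sub (integrable_const a)
  have hlin (x : ℝ) :
      gaussianLogRatio v a m x = ((a - m) ^ 2 + 2 * (a - m) * (x - a)) / (2 * v) := by
    unfold gaussianLogRatio; ring
  simp_rw [hlin]
  rw [integral_div, integral_add (integrable_const _) (hsub.const_mul _),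
    integral_const_mul, integral_sub hid (integrable_const a), integral_id_gaussianReal]
  simp

noncomputable def gaussianKernel (v : ℝ≥0) : Kernel ℝ ℝ where
  toFun m := gaussianReal m v
  measurable' := measurable_gaussianReal.comp (measurable_id.prodMk measurable_const)

instance (v : ℝ≥0) : IsMarkovKernel (gaussianKernel v) :=
  ⟨fun m => inferInstanceAs (IsProbabilityMeasure (gaussianReal m v))⟩

@[simp]
lemma gaussianKernel_apply (v : ℝ≥0) (m : ℝ) : gaussianKernel v m = gaussianReal m v := rfl

end Gaussian

section Mixture

variable {Ω : Type*} [MeasurableSpace Ω] {P : Measure Ω} {b : Ω → ℝ} {v : ℝ≥0} {a : ℝ}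

lemma integrable_gaussianLogRatio_prod [IsFiniteMeasure P] (hb : Measurable b)
    (hint : Integrable (fun ω => (a - b ω) ^ 2) P) :
    Integrable (fun p : Ω × ℝ => gaussianLogRatio v a (b p.1) p.2)
      (P.prod (gaussianReal a v)) := by
  have hab : Integrable (fun ω => a - b ω) P :=
    ((memLp_two_iff_integrable_sq (by fun_prop)).2 hint).integrable one_le_two
  have hsub : Integrable (fun x => x - a) (gaussianReal a v) :=
    ((memLp_id_gaussianReal 1).integrable le_rfl).sub (integrable_const a)
  refine (((hint.comp_fst _).add ((hab.mul_prod hsub).const_mul 2)).div_const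
    (2 * (v : ℝ))).congr (ae_of_all _ fun p => ?_)
  simp only [gaussianLogRatio, Pi.add_apply]
  ring

lemma integral_gaussianLogRatio_prod [IsFiniteMeasure P] (hb : Measurable b)
    (hint : Integrable (fun ω => (a - b ω) ^ 2) P) :
    ∫ p, gaussianLogRatio v a (b p.1) p.2 ∂(P.prod (gaussianReal a v))
      = ∫ ω, (a - b ω) ^ 2 / (2 * v) ∂P := by
  rw [integral_prod _ (integrable_gaussianLogRatio_prod hb hint)]
  simp_rw [integral_gaussianLogRatio]

lemma compProd_const_gaussianReal_eq_withDensity [SFinite P] (hv : v ≠ 0) (hb : Measurable b) :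
    P ⊗ₘ Kernel.const Ω (gaussianReal a v) = (P ⊗ₘ (gaussianKernel v).comap b hb).withDensity
      fun p => ENNReal.ofReal (exp (gaussianLogRatio v a (b p.1) p.2)) := by
  have hf : Measurable (Function.uncurry fun ω x =>
      ENNReal.ofReal (exp (gaussianLogRatio v a (b ω) x))) := by
    unfold gaussianLogRatio; fun_prop
  have : IsSFiniteKernel (((gaussianKernel v).comap b hb).withDensity
      fun ω x => ENNReal.ofReal (exp (gaussianLogRatio v a (b ω) x))) :=
    Kernel.IsSFiniteKernel.withDensity _ fun _ _ => ENNReal.ofReal_ne_top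
  rw [← Measure.compProd_withDensity hf]
  congr 1
  ext ω : 1
  rw [Kernel.withDensity_apply _ hf, Kernel.const_apply, Kernel.comap_apply, gaussianKernel_apply,
    ← gaussianReal_eq_withDensity_exp_gaussianLogRatio hv]

lemma klDiv_compProd_const_gaussianReal [IsProbabilityMeasure P] (hv : v ≠ 0)
    (hb : Measurable b) (hint : Integrable (fun ω => (a - b ω) ^ 2) P) :
    InformationTheory.klDiv (P ⊗ₘ Kernel.const Ω (gaussianReal a v))
        (P ⊗ₘ (gaussianKernel v).comap b hb)
      = ENNReal.ofReal (∫ ω, (a - b ω) ^ 2 / (2 * v) ∂P) := by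
  rw [klDiv_eq_integral_of_eq_withDensity_exp (by unfold gaussianLogRatio; fun_prop)
      (compProd_const_gaussianReal_eq_withDensity hv hb)
      (by rw [Measure.compProd_const]; exact integrable_gaussianLogRatio_prod hb hint),
    Measure.compProd_const, integral_gaussianLogRatio_prod hb hint]

end Mixture

/-- One-dimensional per-step bound: for a variance `σ² = v > 0`, a mean `a ∈ ℝ`, and a
Gaussian mixture `ν(A) = ∫ N(b(ω), σ²)(A) dP(ω)`, one has
`D_KL(N(a, σ²) ‖ ν) ≤ ∫ (a − b(ω))² / (2σ²) dP(ω)`. -/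
theorem klDiv_gaussian_mixture_le
    (v : ℝ≥0) (hv : 0 < v) (a : ℝ)
    {Ω : Type*} [MeasurableSpace Ω] (P : Measure Ω) [IsProbabilityMeasure P]
    (b : Ω → ℝ) (hb : Measurable b)
    (hint : Integrable (fun ω => (a - b ω) ^ 2) P) :
    klDiv (gaussianReal a v) (P.bind fun ω => gaussianReal (b ω) v)
      ≤ ENNReal.ofReal (∫ ω, (a - b ω) ^ 2 / (2 * (v : ℝ)) ∂P) := by
  calc klDiv (gaussianReal a v) (P.bind fun ω => gaussianReal (b ω) v)
      = InformationTheory.klDiv (Kernel.const Ω (gaussianReal a v) ∘ₘ P)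
          ((gaussianKernel v).comap b hb ∘ₘ P) := by
        rw [Measure.const_comp, measure_univ, one_smul]
        exact klDiv_eq_informationTheory_klDiv (ν := (gaussianKernel v).comap b hb ∘ₘ P)
    _ ≤ InformationTheory.klDiv (P ⊗ₘ Kernel.const Ω (gaussianReal a v))
          (P ⊗ₘ (gaussianKernel v).comap b hb) := klDiv_comp_le_klDiv_compProd P _ _
    _ = ENNReal.ofReal (∫ ω, (a - b ω) ^ 2 / (2 * (v : ℝ)) ∂P) :=
        klDiv_compProd_const_gaussianReal hv.ne' hb hint
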